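/- Let S̃ be a finite ground set, g : 2^S̃ → ℝ a set function with strictly positive marginal gains (g(S ∪ {i}) > g(S) for all S ⊆ S̃ and i ∈ S̃ \ S), D̂ : S̃ → ℝ strictly positive costs, and θ ∈ ℝ a threshold with g(S̃) ≥ θ. If client α ∈ S̃ belongs to the output of the vanilla greedy incentive search (Algorithm 3) run on S̃ with costs D̂, then for every cost profile D̂' that agrees with D̂ on S̃ \ {α} and satisfies 0 < D̂'(α) ≤ D̂(α), α also belongs to the output of Algorithm 3 run on S̃ with costs D̂'. (Monotonicity of the vanilla greedy incentive search.) -/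

import Mathlib

/-!
Lowering `D̂(α)` raises α's marginal ratio and leaves every other ratio unchanged. So at any
stage at which α has not been picked yet, the run with costs `D̂'` picks either α or the very
element the run with `D̂` picks; the two runs therefore coincide until the `D̂'`-run picks α,
which it does no later than the `D̂`-run.
-/

open Finset

variable {ι : Type*}

/-- The marginal-gain-to-cost ratio `(g(S ∪ {u}) − g(S)) / D̂(u)`. -/
noncomputable def marginalRatio [LinearOrder ι] (g : Finset ι → ℝ) (D : ι → ℝ)
    (S : Finset ι) (u : ι) : ℝ :=
  (g (insert u S) - g S) / D u

/-- The while-loop of the vanilla greedy incentive search (Algorithm 3), with fuel: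
while `g(S) < θ`, add to `S` the element of `C \ S` with the largest
marginal-gain-to-cost ratio (ties broken by the linear order on `ι`), recording the
selected elements in order. -/
noncomputable def vanillaAux [LinearOrder ι] (g : Finset ι → ℝ) (D : ι → ℝ)
    (C : Finset ι) (θ : ℝ) : ℕ → Finset ι → List ι
  | 0, _ => []
  | n + 1, S =>
    if θ ≤ g S then []
    else
      let T := C \ S
      let T' := T.filter fun u => ∀ v ∈ T, marginalRatio g D S v ≤ marginalRatio g D S u
      if h : T'.Nonempty then T'.min' h :: vanillaAux g D C θ n (insert (T'.min' h) S)
      else []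

/-- The sequence of elements selected by the vanilla greedy incentive search
(Algorithm 3) on the candidate set `C` with threshold `θ`, in selection order. -/
noncomputable def vanillaSeq [LinearOrder ι] (g : Finset ι → ℝ) (D : ι → ℝ)
    (C : Finset ι) (θ : ℝ) : List ι :=
  vanillaAux g D C θ (C.card + 1) ∅

/-- The output set of the vanilla greedy incentive search (Algorithm 3). -/
noncomputable def vanillaSearch [LinearOrder ι] (g : Finset ι → ℝ) (D : ι → ℝ)
    (C : Finset ι) (θ : ℝ) : Finset ι :=
  (vanillaSeq g D C θ).toFinset

noncomputable def maximizers (T : Finset ι) (f : ι → ℝ) : Finset ι :=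
  T.filter fun u => ∀ v ∈ T, f v ≤ f u

section Maximizers

variable {T : Finset ι} {f f' : ι → ℝ}

lemma maximizers_nonempty (hT : T.Nonempty) : (maximizers T f).Nonempty := by
  obtain ⟨u, hu, hmax⟩ := T.exists_max_image f hT
  exact ⟨u, mem_filter.2 ⟨hu, hmax⟩⟩

lemma min'_maximizers_eq_of_le [LinearOrder ι] (hle : ∀ v ∈ T, f v ≤ f' v)
    (hM : (maximizers T f).Nonempty) (hM' : (maximizers T f').Nonempty)
    (heq : f' ((maximizers T f').min' hM') = f ((maximizers T f').min' hM')) :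
    (maximizers T f').min' hM' = (maximizers T f).min' hM := by
  set m := (maximizers T f).min' hM
  set m' := (maximizers T f').min' hM'
  obtain ⟨hmT, hm⟩ := mem_filter.1 (min'_mem _ hM)
  obtain ⟨hm'T, hm'⟩ := mem_filter.1 (min'_mem _ hM')
  have hm'M : m' ∈ maximizers T f :=
    mem_filter.2 ⟨hm'T, fun v hv => (hle v hv).trans (heq ▸ hm' v hv)⟩
  have hmM' : m ∈ maximizers T f' := by
    refine mem_filter.2 ⟨hmT, fun v hv => ?_⟩
    calc f' v ≤ f' m' := hm' v hv
      _ = f m' := heq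
      _ ≤ f m := hm m' hm'T
      _ ≤ f' m := hle m hmT
  exact le_antisymm (min'_le _ _ hmM') (min'_le _ _ hm'M)

end Maximizers

section VanillaSearch

variable [LinearOrder ι] {g : Finset ι → ℝ} {D D' : ι → ℝ} {C : Finset ι} {θ : ℝ}

lemma vanillaAux_succ_of_lt (n : ℕ) {S : Finset ι} (hS : g S < θ) :
    vanillaAux g D C θ (n + 1) S =
      if h : (maximizers (C \ S) (marginalRatio g D S)).Nonempty then
        (maximizers (C \ S) (marginalRatio g D S)).min' h ::
          vanillaAux g D C θ n (insert ((maximizers (C \ S) (marginalRatio g D S)).min' h) S)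
      else [] := by
  rw [vanillaAux, if_neg hS.not_ge]
  rfl

lemma marginalRatio_le_of_le {S : Finset ι} {u : ι} (hg : g S ≤ g (insert u S))
    (hD' : 0 < D' u) (hle : D' u ≤ D u) :
    marginalRatio g D S u ≤ marginalRatio g D' S u :=
  div_le_div_of_nonneg_left (sub_nonneg.2 hg) hD' hle

lemma mem_vanillaAux_of_cost_le {α : ι} (hα : α ∈ C)
    (hg : ∀ S ⊆ C, α ∉ S → g S ≤ g (insert α S)) (hD' : 0 < D' α)
    (hagree : ∀ i ∈ C, i ≠ α → D' i = D i) (hle : D' α ≤ D α) :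
    ∀ (n : ℕ) (S : Finset ι), S ⊆ C → α ∉ S →
      α ∈ vanillaAux g D C θ n S → α ∈ vanillaAux g D' C θ n S := by
  intro n
  induction n with
  | zero => simp [vanillaAux]
  | succ n ih =>
    intro S hSC hαS hmem
    by_cases hθ : θ ≤ g S
    · simp [vanillaAux, hθ] at hmem
    rw [not_le] at hθ
    rw [vanillaAux_succ_of_lt n hθ] at hmem ⊢
    have hαT : α ∈ C \ S := mem_sdiff.2 ⟨hα, hαS⟩
    have hM' := maximizers_nonempty (f := marginalRatio g D' S) ⟨α, hαT⟩
    rw [dif_pos hM']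
    by_cases hM : (maximizers (C \ S) (marginalRatio g D S)).Nonempty
    swap
    · simp [dif_neg hM] at hmem
    rw [dif_pos hM] at hmem
    set m' := (maximizers (C \ S) (marginalRatio g D' S)).min' hM'
    by_cases hm'α : m' = α
    · exact hm'α ▸ List.mem_cons_self
    have hm'C : m' ∈ C := (mem_sdiff.1 (mem_filter.1 (min'_mem _ hM')).1).1
    have hratio : ∀ v ∈ C \ S, marginalRatio g D S v ≤ marginalRatio g D' S v := by
      intro v hv
      by_cases hvα : v = α
      · exact hvα ▸ marginalRatio_le_of_le (hg S hSC hαS) hD' hle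
      · rw [marginalRatio, marginalRatio, hagree v (mem_sdiff.1 hv).1 hvα]
    have hm'm : m' = (maximizers (C \ S) (marginalRatio g D S)).min' hM :=
      min'_maximizers_eq_of_le hratio hM hM'
        (by rw [marginalRatio, marginalRatio, hagree m' hm'C hm'α])
    rw [← hm'm] at hmem
    refine List.mem_cons_of_mem _ (ih _ (insert_subset hm'C hSC) ?_ ?_)
    · simp [hαS, Ne.symm hm'α]
    · simpa [Ne.symm hm'α] using hmem

end VanillaSearch

theorem vanillaSearch_monotone_general [LinearOrder ι] (Stilde : Finset ι) (g : Finset ι → ℝ)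
    (hg_strict : ∀ S : Finset ι, S ⊆ Stilde → ∀ i ∈ Stilde, i ∉ S → g S < g (insert i S))
    (D D' : ι → ℝ) (hD' : ∀ i ∈ Stilde, 0 < D' i)
    (θ : ℝ)
    (α : ι) (hα : α ∈ Stilde)
    (hagree : ∀ i ∈ Stilde, i ≠ α → D' i = D i) (hle : D' α ≤ D α)
    (hmem : α ∈ vanillaSearch g D Stilde θ) :
    α ∈ vanillaSearch g D' Stilde θ := by
  rw [vanillaSearch, vanillaSeq, List.mem_toFinset] at hmem ⊢
  exact mem_vanillaAux_of_cost_le hα (fun S hS hαS => (hg_strict S hS α hα hαS).le)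
    (hD' α hα) hagree hle _ ∅ (empty_subset _) (notMem_empty α) hmem

/-- Monotonicity of the vanilla greedy incentive search (Algorithm 3): if client `α` is
selected when it reports `D̂(α)`, it remains selected when it reports any smaller
positive cost, all other reports being unchanged. -/
theorem vanillaSearch_monotone [LinearOrder ι] (Stilde : Finset ι) (g : Finset ι → ℝ)
    (hg_strict : ∀ S : Finset ι, S ⊆ Stilde → ∀ i ∈ Stilde, i ∉ S → g S < g (insert i S))
    (D D' : ι → ℝ) (hD : ∀ i ∈ Stilde, 0 < D i) (hD' : ∀ i ∈ Stilde, 0 < D' i)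
    (θ : ℝ) (hθ : θ ≤ g Stilde)
    (α : ι) (hα : α ∈ Stilde)
    (hagree : ∀ i ∈ Stilde, i ≠ α → D' i = D i) (hle : D' α ≤ D α)
    (hmem : α ∈ vanillaSearch g D Stilde θ) :
    α ∈ vanillaSearch g D' Stilde θ :=
  vanillaSearch_monotone_general Stilde g hg_strict D D' hD' θ α hα hagree hle hmem
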